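/- arXiv:2106.11256 — 2 statements merged into one kernel-verified Lean document; each statement's English description precedes it below -/
import Mathlib

section
/- The pair h(x,t) = 1 − (x − cos(√2 t))² and u(x,t) = −√2 sin(√2 t), on the region where |x − cos(√2 t)| < 1, is an exact solution of the shallow water equations with g = 1 over the parabolic topography b(x) = x² − 1. -/
/-!
A parabolic lake `h = 1 - (x - c(t))²` translated rigidly with velocity `u = c'(t)` solves the
shallow water equations over `b = x² - 1` as soon as `c'' = -2c`: the mass equation only needs
`u = c'`, while in the momentum equation the pressure gradient `h h_x = -2 (x - c) h` and the
acceleration `u' h = c'' h` must add up to the bed force `-2 x h`. Thacker's solution is the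
case `c(t) = cos (√2 t)`.
-/

open Real

/-- Thacker depth. -/
noncomputable def thackerH (x t : ℝ) : ℝ := 1 - (x - Real.cos (Real.sqrt 2 * t))^2
/-- Thacker velocity. -/
noncomputable def thackerU (_x t : ℝ) : ℝ := -Real.sqrt 2 * Real.sin (Real.sqrt 2 * t)
/-- Parabolic bed. -/
noncomputable def thackerB (x : ℝ) : ℝ := x^2 - 1

section ParabolicLake

variable {c w : ℝ → ℝ} {x t : ℝ}

theorem hasDerivAt_one_sub_const_sub_sq (hc : HasDerivAt c (w t) t) :
    HasDerivAt (fun s => 1 - (x - c s) ^ 2) (2 * (x - c t) * w t) t :=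
  (((hasDerivAt_const t x).fun_sub hc).fun_pow 2 |>.const_sub 1).congr_deriv
    (by push_cast; ring)

theorem hasDerivAt_one_sub_sub_const_sq (a : ℝ) :
    HasDerivAt (fun y => 1 - (y - a) ^ 2) (-2 * (x - a)) x :=
  (((hasDerivAt_id' x).sub_const a).fun_pow 2 |>.const_sub 1).congr_deriv
    (by push_cast; ring)

theorem shallowWater_mass_parabolicLake (hc : HasDerivAt c (w t) t) :
    deriv (fun s => 1 - (x - c s) ^ 2) t
      + deriv (fun y => w t * (1 - (y - c t) ^ 2)) x = 0 := by
  rw [(hasDerivAt_one_sub_const_sub_sq hc).deriv,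
    ((hasDerivAt_one_sub_sub_const_sq (c t)).const_mul (w t)).deriv]
  ring

theorem shallowWater_momentum_parabolicLake (hc : HasDerivAt c (w t) t)
    (hw : HasDerivAt w (-2 * c t) t) :
    deriv (fun s => w s * (1 - (x - c s) ^ 2)) t
      + deriv (fun y => w t ^ 2 * (1 - (y - c t) ^ 2) + (1 - (y - c t) ^ 2) ^ 2 / 2) x
      = -(1 - (x - c t) ^ 2) * (2 * x) := by
  have hx := hasDerivAt_one_sub_sub_const_sq (x := x) (c t)
  rw [(hw.fun_mul (hasDerivAt_one_sub_const_sub_sq hc)).deriv,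
    ((hx.const_mul (w t ^ 2)).fun_add ((hx.fun_pow 2).div_const 2)).deriv]
  ring

end ParabolicLake

theorem hasDerivAt_cos_sqrt_two_mul (t : ℝ) :
    HasDerivAt (fun s => cos (√2 * s)) (-√2 * sin (√2 * t)) t :=
  ((hasDerivAt_id' t).const_mul √2).cos.congr_deriv (by ring)

theorem hasDerivAt_neg_sqrt_two_mul_sin_sqrt_two_mul (t : ℝ) :
    HasDerivAt (fun s => -√2 * sin (√2 * s)) (-2 * cos (√2 * t)) t :=
  (((hasDerivAt_id' t).const_mul √2).sin.const_mul (-√2)).congr_deriv <| by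
    linear_combination (-cos (√2 * t)) * mul_self_sqrt (zero_le_two (α := ℝ))

theorem deriv_thackerB (x : ℝ) : deriv thackerB x = 2 * x :=
  (((hasDerivAt_pow 2 x).sub_const 1).congr_deriv (by push_cast; ring)).deriv

theorem thacker_exact_solution_general (x t : ℝ) :
    (deriv (fun s => thackerH x s) t
      + deriv (fun y => thackerU y t * thackerH y t) x = 0) ∧
    (deriv (fun s => thackerU x s * thackerH x s) t
      + deriv (fun y => (thackerU y t)^2 * thackerH y t + (thackerH y t)^2 / 2) x
      = -(thackerH x t) * deriv thackerB x) := by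
  rw [deriv_thackerB]
  exact ⟨shallowWater_mass_parabolicLake (hasDerivAt_cos_sqrt_two_mul t),
    shallowWater_momentum_parabolicLake (hasDerivAt_cos_sqrt_two_mul t)
      (hasDerivAt_neg_sqrt_two_mul_sin_sqrt_two_mul t)⟩

/-- Thacker's planar oscillation is an exact solution of the shallow water
equations with g = 1 over the parabolic topography b(x) = x² − 1, on the wet
region |x − cos(√2 t)| < 1. -/
theorem thacker_exact_solution (x t : ℝ)
    (hwet : |x - Real.cos (Real.sqrt 2 * t)| < 1) :
    (deriv (fun s => thackerH x s) t
      + deriv (fun y => thackerU y t * thackerH y t) x = 0) ∧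
    (deriv (fun s => thackerU x s * thackerH x s) t
      + deriv (fun y => (thackerU y t)^2 * thackerH y t + (thackerH y t)^2 / 2) x
      = -(thackerH x t) * deriv thackerB x) :=
  thacker_exact_solution_general x t
end

section
/- Let Θ(a, f) := 1 − (1/a^{p₂} + 1)^{−p₃}(1/f^{p₂} + 1)^{−p₃} for a, f > 0 and p₂, p₃ > 0. Then Θ takes values in (0,1), is decreasing in a and in f, and satisfies: (i) if a = O(Δx^{1−p₁}) and f = O(Δx^{1−p₁}) as Δx → 0 with 0 < p₁ < 1, then 1 − Θ = O(Δx^{2p₂p₃(1−p₁)}); (ii) if a and f are both ≥ c Δx^{−p₁} for some c > 0, then Θ = O(Δx^{p₁p₂}). -/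
open Filter Topology Asymptotics

/-- The shock detector Θ(a,f) = 1 − (1/a^p₂+1)^(−p₃)(1/f^p₂+1)^(−p₃). -/
noncomputable def shockTheta (p₂ p₃ a f : ℝ) : ℝ :=
  1 - (1 / a ^ p₂ + 1) ^ (-p₃) * (1 / f ^ p₂ + 1) ^ (-p₃)

/-!
Writing `Θ(a, f) = 1 - u(a) u(f)` with `u(a) = (a^{-p₂} + 1)^{-p₃}`, everything follows from
three one-variable facts about `u` on `(0, ∞)`: it is strictly increasing with values in `(0, 1)`,
`u(a) ≤ (a^{-p₂})^{-p₃} = a^{p₂ p₃}`, and, by the Bernoulli-type bound `(1 + s)^{-p} ≥ 1 - p s`,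
`1 - u(a) ≤ p₃ a^{-p₂}`. The first gives the range and monotonicity of `Θ`, the second bounds
`1 - Θ` by `a^{p₂p₃} f^{p₂p₃}` for small arguments, and the third bounds
`Θ ≤ (1 - u(a)) + (1 - u(f))` by `p₃ (a^{-p₂} + f^{-p₂})` for large ones.
-/

lemma one_sub_mul_le_one_add_rpow_neg {p s : ℝ} (hp : 0 ≤ p) (hs : 0 ≤ s) :
    1 - p * s ≤ (1 + s) ^ (-p) := by
  have hpos : 0 < 1 + s := by linarith
  have hlog : Real.log (1 + s) ≤ s := by linarith [Real.log_le_sub_one_of_pos hpos]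
  calc 1 - p * s ≤ 1 + Real.log (1 + s) * -p := by nlinarith
    _ ≤ Real.exp (Real.log (1 + s) * -p) := by
        linarith [Real.add_one_le_exp (Real.log (1 + s) * -p)]
    _ = (1 + s) ^ (-p) := (Real.rpow_def_of_pos hpos _).symm

noncomputable def shockFactor (p₂ p₃ a : ℝ) : ℝ :=
  (1 / a ^ p₂ + 1) ^ (-p₃)

namespace shockFactor

variable {p₂ p₃ a : ℝ}

lemma pos (ha : 0 ≤ a) : 0 < shockFactor p₂ p₃ a := by
  unfold shockFactor; positivity

lemma le_one (hp₃ : 0 ≤ p₃) (ha : 0 ≤ a) : shockFactor p₂ p₃ a ≤ 1 :=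
  Real.rpow_le_one_of_one_le_of_nonpos (le_add_of_nonneg_left (by positivity)) (by linarith)

lemma lt_one (hp₃ : 0 < p₃) (ha : 0 < a) : shockFactor p₂ p₃ a < 1 :=
  Real.rpow_lt_one_of_one_lt_of_neg (lt_add_of_pos_left _ (by positivity)) (by linarith)

lemma le_rpow (hp₃ : 0 ≤ p₃) (ha : 0 < a) : shockFactor p₂ p₃ a ≤ a ^ (p₂ * p₃) := by
  calc shockFactor p₂ p₃ a ≤ (1 / a ^ p₂) ^ (-p₃) :=
        Real.rpow_le_rpow_of_nonpos (by positivity) (by linarith) (by linarith)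
    _ = a ^ (p₂ * p₃) := by
        rw [one_div, ← Real.rpow_neg ha.le, ← Real.rpow_mul ha.le, neg_mul_neg]

lemma one_sub_le (hp₃ : 0 ≤ p₃) (ha : 0 ≤ a) : 1 - shockFactor p₂ p₃ a ≤ p₃ * a ^ (-p₂) := by
  have := one_sub_mul_le_one_add_rpow_neg hp₃ (Real.rpow_nonneg ha (-p₂))
  rw [shockFactor, one_div, ← Real.rpow_neg ha, add_comm]
  linarith

lemma strictMonoOn (hp₂ : 0 < p₂) (hp₃ : 0 < p₃) :
    StrictMonoOn (shockFactor p₂ p₃) (Set.Ioi 0) := by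
  intro a (ha : 0 < a) a' (ha' : 0 < a') haa'
  have hinv : 1 / a' ^ p₂ < 1 / a ^ p₂ :=
    one_div_lt_one_div_of_lt (by positivity) (Real.rpow_lt_rpow ha.le haa' hp₂)
  exact Real.rpow_lt_rpow_of_neg (by positivity) (by linarith) (by linarith)

end shockFactor

namespace shockTheta

variable {p₂ p₃ a a' f : ℝ}

lemma eq_one_sub_mul (p₂ p₃ a f : ℝ) :
    shockTheta p₂ p₃ a f = 1 - shockFactor p₂ p₃ a * shockFactor p₂ p₃ f := rfl

lemma one_sub_eq_mul (p₂ p₃ a f : ℝ) :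
    1 - shockTheta p₂ p₃ a f = shockFactor p₂ p₃ a * shockFactor p₂ p₃ f :=
  sub_sub_cancel _ _

lemma comm (p₂ p₃ a f : ℝ) : shockTheta p₂ p₃ a f = shockTheta p₂ p₃ f a := by
  simp only [eq_one_sub_mul, mul_comm]

lemma mem_Ioo (hp₃ : 0 < p₃) (ha : 0 < a) (hf : 0 < f) : shockTheta p₂ p₃ a f ∈ Set.Ioo 0 1 := by
  have hua := shockFactor.pos (p₂ := p₂) (p₃ := p₃) ha.le
  have huf := shockFactor.pos (p₂ := p₂) (p₃ := p₃) hf.le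
  have hua' := shockFactor.lt_one (p₂ := p₂) hp₃ ha
  have huf' := shockFactor.lt_one (p₂ := p₂) hp₃ hf
  rw [eq_one_sub_mul]
  constructor <;> nlinarith

lemma lt_of_lt_left (hp₂ : 0 < p₂) (hp₃ : 0 < p₃) (ha : 0 < a) (haa' : a < a') (hf : 0 < f) :
    shockTheta p₂ p₃ a' f < shockTheta p₂ p₃ a f := by
  have hu := shockFactor.strictMonoOn hp₂ hp₃ ha (ha.trans haa') haa'
  have huf := shockFactor.pos (p₂ := p₂) (p₃ := p₃) hf.le
  rw [eq_one_sub_mul, eq_one_sub_mul]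
  nlinarith

lemma one_sub_le (hp₃ : 0 ≤ p₃) (ha : 0 < a) (hf : 0 < f) :
    1 - shockTheta p₂ p₃ a f ≤ a ^ (p₂ * p₃) * f ^ (p₂ * p₃) := by
  rw [one_sub_eq_mul]
  exact mul_le_mul (shockFactor.le_rpow hp₃ ha) (shockFactor.le_rpow hp₃ hf)
    (shockFactor.pos hf.le).le (by positivity)

lemma nonneg (hp₃ : 0 ≤ p₃) (ha : 0 ≤ a) (hf : 0 ≤ f) : 0 ≤ shockTheta p₂ p₃ a f := by
  rw [eq_one_sub_mul, sub_nonneg]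
  exact mul_le_one₀ (shockFactor.le_one hp₃ ha) (shockFactor.pos hf).le (shockFactor.le_one hp₃ hf)

lemma le_mul_rpow_neg_add (hp₃ : 0 ≤ p₃) (ha : 0 ≤ a) (hf : 0 ≤ f) :
    shockTheta p₂ p₃ a f ≤ p₃ * (a ^ (-p₂) + f ^ (-p₂)) := by
  have hua := shockFactor.le_one (p₂ := p₂) hp₃ ha
  have huf := shockFactor.le_one (p₂ := p₂) hp₃ hf
  have hΘ : shockTheta p₂ p₃ a f ≤ (1 - shockFactor p₂ p₃ a) + (1 - shockFactor p₂ p₃ f) := by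
    rw [eq_one_sub_mul]
    nlinarith [mul_nonneg (sub_nonneg.2 hua) (sub_nonneg.2 huf)]
  linarith [shockFactor.one_sub_le (p₂ := p₂) hp₃ ha, shockFactor.one_sub_le (p₂ := p₂) hp₃ hf]

variable {α : Type*} {l : Filter α} {A F g : α → ℝ}

theorem one_sub_isBigO_rpow_mul_rpow (hp₂ : 0 ≤ p₂) (hp₃ : 0 ≤ p₃)
    (hpos : ∀ᶠ x in l, 0 < A x ∧ 0 < F x) (hg : 0 ≤ᶠ[l] g) (hA : A =O[l] g) (hF : F =O[l] g) :
    (fun x => 1 - shockTheta p₂ p₃ (A x) (F x)) =O[l]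
      fun x => g x ^ (p₂ * p₃) * g x ^ (p₂ * p₃) := by
  have hq : 0 ≤ p₂ * p₃ := mul_nonneg hp₂ hp₃
  refine IsBigO.trans ?_ ((hA.rpow hq hg).mul (hF.rpow hq hg))
  refine IsBigO.of_bound' ?_
  filter_upwards [hpos] with x ⟨hAx, hFx⟩
  have hΘ : 0 ≤ 1 - shockTheta p₂ p₃ (A x) (F x) := by
    rw [one_sub_eq_mul]
    exact mul_nonneg (shockFactor.pos hAx.le).le (shockFactor.pos hFx.le).le
  rw [Real.norm_of_nonneg hΘ, Real.norm_of_nonneg (by positivity)]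
  exact one_sub_le hp₃ hAx hFx

theorem isBigO_rpow_neg (hp₂ : 0 ≤ p₂) (hp₃ : 0 ≤ p₃) {c : ℝ} (hc : 0 < c) (hg : ∀ᶠ x in l, 0 < g x)
    (hbound : ∀ᶠ x in l, c * g x ≤ A x ∧ c * g x ≤ F x) :
    (fun x => shockTheta p₂ p₃ (A x) (F x)) =O[l] fun x => g x ^ (-p₂) := by
  refine IsBigO.of_bound (2 * p₃ * c ^ (-p₂)) ?_
  filter_upwards [hg, hbound] with x hgx ⟨hAx, hFx⟩
  have hcg : 0 < c * g x := mul_pos hc hgx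
  have hinv : ∀ y, c * g x ≤ y → y ^ (-p₂) ≤ c ^ (-p₂) * g x ^ (-p₂) := fun y hy => by
    rw [← Real.mul_rpow hc.le hgx.le]
    exact Real.rpow_le_rpow_of_nonpos hcg hy (by linarith)
  rw [Real.norm_of_nonneg (nonneg hp₃ (hcg.le.trans hAx) (hcg.le.trans hFx)),
    Real.norm_of_nonneg (by positivity)]
  calc shockTheta p₂ p₃ (A x) (F x) ≤ p₃ * (A x ^ (-p₂) + F x ^ (-p₂)) :=
        le_mul_rpow_neg_add hp₃ (hcg.le.trans hAx) (hcg.le.trans hFx)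
    _ ≤ p₃ * (c ^ (-p₂) * g x ^ (-p₂) + c ^ (-p₂) * g x ^ (-p₂)) := by
        gcongr <;> exact hinv _ ‹_›
    _ = 2 * p₃ * c ^ (-p₂) * g x ^ (-p₂) := by ring

end shockTheta

theorem shockTheta_properties_general (p₁ p₂ p₃ : ℝ)
    (hp₂ : 0 < p₂) (hp₃ : 0 < p₃) :
    (∀ a f : ℝ, 0 < a → 0 < f → shockTheta p₂ p₃ a f ∈ Set.Ioo (0:ℝ) 1) ∧
    (∀ a a' f : ℝ, 0 < a → a < a' → 0 < f →
      shockTheta p₂ p₃ a' f < shockTheta p₂ p₃ a f) ∧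
    (∀ a f f' : ℝ, 0 < a → 0 < f → f < f' →
      shockTheta p₂ p₃ a f' < shockTheta p₂ p₃ a f) ∧
    (∀ A F : ℝ → ℝ,
      (∀ᶠ d in 𝓝[>] (0:ℝ), 0 < A d ∧ 0 < F d) →
      (A =O[𝓝[>] (0:ℝ)] fun d => d ^ (1 - p₁)) →
      (F =O[𝓝[>] (0:ℝ)] fun d => d ^ (1 - p₁)) →
      ((fun d => 1 - shockTheta p₂ p₃ (A d) (F d))
        =O[𝓝[>] (0:ℝ)] fun d => d ^ (2 * p₂ * p₃ * (1 - p₁)))) ∧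
    (∀ A F : ℝ → ℝ, ∀ c : ℝ, 0 < c →
      (∀ᶠ d in 𝓝[>] (0:ℝ), c * d ^ (-p₁) ≤ A d ∧ c * d ^ (-p₁) ≤ F d) →
      ((fun d => shockTheta p₂ p₃ (A d) (F d))
        =O[𝓝[>] (0:ℝ)] fun d => d ^ (p₁ * p₂))) := by
  have hd : ∀ᶠ d in 𝓝[>] (0:ℝ), 0 < d := self_mem_nhdsWithin
  refine ⟨fun a f => shockTheta.mem_Ioo hp₃,
    fun a a' f => shockTheta.lt_of_lt_left hp₂ hp₃,
    fun a f f' ha hf hff' => ?_, fun A F hpos hA hF => ?_, fun A F c hc hbound => ?_⟩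
  · rw [shockTheta.comm _ _ a, shockTheta.comm _ _ a]
    exact shockTheta.lt_of_lt_left hp₂ hp₃ hf hff' ha
  · have hg : 0 ≤ᶠ[𝓝[>] (0:ℝ)] fun d => d ^ (1 - p₁) :=
      hd.mono fun d hd => Real.rpow_nonneg hd.le _
    refine (shockTheta.one_sub_isBigO_rpow_mul_rpow hp₂.le hp₃.le hpos hg hA hF).congr' .rfl ?_
    filter_upwards [hd] with d hd
    rw [← Real.rpow_add (by positivity), ← Real.rpow_mul hd.le]
    ring_nf
  · have hg : ∀ᶠ d in 𝓝[>] (0:ℝ), 0 < d ^ (-p₁) := hd.mono fun d hd => by positivity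
    refine (shockTheta.isBigO_rpow_neg hp₂.le hp₃.le hc hg hbound).congr' .rfl ?_
    filter_upwards [hd] with d hd
    rw [← Real.rpow_mul hd.le, neg_mul_neg]

/-- Θ takes values in (0,1), is decreasing in each argument, and has the
stated asymptotic behaviour in smooth regions and near shocks. -/
theorem shockTheta_properties (p₁ p₂ p₃ : ℝ)
    (hp₁ : 0 < p₁) (hp₁' : p₁ < 1) (hp₂ : 0 < p₂) (hp₃ : 0 < p₃) :
    (∀ a f : ℝ, 0 < a → 0 < f → shockTheta p₂ p₃ a f ∈ Set.Ioo (0:ℝ) 1) ∧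
    (∀ a a' f : ℝ, 0 < a → a < a' → 0 < f →
      shockTheta p₂ p₃ a' f < shockTheta p₂ p₃ a f) ∧
    (∀ a f f' : ℝ, 0 < a → 0 < f → f < f' →
      shockTheta p₂ p₃ a f' < shockTheta p₂ p₃ a f) ∧
    (∀ A F : ℝ → ℝ,
      (∀ᶠ d in 𝓝[>] (0:ℝ), 0 < A d ∧ 0 < F d) →
      (A =O[𝓝[>] (0:ℝ)] fun d => d ^ (1 - p₁)) →
      (F =O[𝓝[>] (0:ℝ)] fun d => d ^ (1 - p₁)) →
      ((fun d => 1 - shockTheta p₂ p₃ (A d) (F d))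
        =O[𝓝[>] (0:ℝ)] fun d => d ^ (2 * p₂ * p₃ * (1 - p₁)))) ∧
    (∀ A F : ℝ → ℝ, ∀ c : ℝ, 0 < c →
      (∀ᶠ d in 𝓝[>] (0:ℝ), c * d ^ (-p₁) ≤ A d ∧ c * d ^ (-p₁) ≤ F d) →
      ((fun d => shockTheta p₂ p₃ (A d) (F d))
        =O[𝓝[>] (0:ℝ)] fun d => d ^ (p₁ * p₂))) :=
  shockTheta_properties_general p₁ p₂ p₃ hp₂ hp₃
end
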